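/- Let n ≥ 1 and let a_1, …, a_n, b_1, …, b_n, c_1, …, c_n, d_1, …, d_n be real numbers. Set μ̂_x = (1/(2n)) Σ_{i=1}^n (c_i + d_i) and μ̂_y = (1/(2n)) Σ_{i=1}^n (a_i + b_i). Then (1/(12n)) Σ_{i=1}^n (b_i − a_i)(d_i − c_i) + (1/n) Σ_{i=1}^n ((a_i + b_i)/2 − μ̂_y)((c_i + d_i)/2 − μ̂_x) = (1/(6n)) Σ_{i=1}^n [2(a_i − μ̂_y)(c_i − μ̂_x) + (a_i − μ̂_y)(d_i − μ̂_x) + (b_i − μ̂_y)(c_i − μ̂_x) + 2(b_i − μ̂_y)(d_i − μ̂_x)]. -/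

import Mathlib

open Finset

/-- The overall ML covariance estimator (within + between, ν = 12) equals
    Billard's empirical symbolic sample covariance. -/
theorem overall_covariance_identity
    (n : ℕ) (hn : 1 ≤ n) (a b c d : ℕ → ℝ)
    (μx μy : ℝ)
    (hμx : μx = (1 / (2 * (n : ℝ))) * ∑ i ∈ Finset.range n, (c i + d i))
    (hμy : μy = (1 / (2 * (n : ℝ))) * ∑ i ∈ Finset.range n, (a i + b i)) :
    (1 / (12 * (n : ℝ))) * ∑ i ∈ Finset.range n, (b i - a i) * (d i - c i)
      + (1 / (n : ℝ)) * ∑ i ∈ Finset.range n,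
          ((a i + b i) / 2 - μy) * ((c i + d i) / 2 - μx)
    = (1 / (6 * (n : ℝ))) * ∑ i ∈ Finset.range n,
        (2 * (a i - μy) * (c i - μx) + (a i - μy) * (d i - μx)
          + (b i - μy) * (c i - μx) + 2 * (b i - μy) * (d i - μx)) := by
  have hn' : (n : ℝ) ≠ 0 := by positivity
  rw [Finset.mul_sum, Finset.mul_sum, Finset.mul_sum, ← Finset.sum_add_distrib]
  refine Finset.sum_congr rfl fun i _ => ?_
  field_simp
  ring
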